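/- Let A ∈ ℝ^{m×n}, c ∈ ℝ^n and define the LP value function v(b) := min{⟨c,x⟩ : Ax = b, x ≥ 0} on the set of b where the LP is feasible and bounded. Then for each such b the one-sided directional derivative of v at b in direction h (whenever v(b + t h) is finite for small t > 0) equals max{⟨u, h⟩ : u ∈ Φ*(b)}, where Φ*(b) = {u : A^T u ≤ c, ⟨u, b⟩ = v(b)} is the set of dual optimal solutions. -/

import Mathlib

/-!
The cone `{A x | x ≥ 0}` is closed: a nonnegative representation of minimal support uses linearly
independent columns, so the cone is a finite union of injective images of closed orthants.
Closedness gives Farkas' lemma (separate a point from a proper cone), attainment of the primal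
optimum, and strong duality.

Let `v = v(b)` and consider the directional LP `min {c·x - μ v : A x - μ b = h, x ≥ 0, μ ≥ 0}`,
feasible because `b + t h` is. Its dual constraints `Aᵀu ≤ c`, `⟨u, b⟩ ≥ v` say exactly
`u ∈ Φ*(b)` (by weak duality at `b`), so its value `V` is `max {⟨u, h⟩ : u ∈ Φ*(b)}`, attained at
a dual `u` and a primal `(x, μ)`. For `x₀` optimal at `b` and `0 < s < 1/(μ+1)`, the point
`(1 - s μ) x₀ + s x` is feasible at `b + s h` with cost `v + s V`, and `u` certifies that this is
optimal. Hence `v(b + s h) = v + s V` and the difference quotient is eventually constant.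
-/

open Finset

/-- The value function of the LP min ⟨c,x⟩ s.t. Ax = b, x ≥ 0. -/
noncomputable def lpVal {m n : ℕ} (A : Matrix (Fin m) (Fin n) ℝ) (c : Fin n → ℝ)
    (b : Fin m → ℝ) : ℝ :=
  sInf {v | ∃ x : Fin n → ℝ, (∀ j, 0 ≤ x j) ∧ A.mulVec x = b ∧ v = ∑ j, c j * x j}

open Function Set Matrix Pointwise

section Cone

variable {σ : Type*} [Finite σ]

theorem exists_nonneg_add_smul_support_ssubset {y d : σ → ℝ} (hy : 0 ≤ y)
    (hd : support d ⊆ support y) (hneg : ∃ j, d j < 0) :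
    ∃ t : ℝ, 0 ≤ y + t • d ∧ support (y + t • d) ⊂ support y := by
  obtain ⟨j₀, hj₀, hmin⟩ := Set.exists_min_image {j | d j < 0} (fun j => y j / -d j)
    (Set.toFinite _) hneg
  have hdj₀ : d j₀ < 0 := hj₀
  refine ⟨y j₀ / -d j₀, fun j => ?_, Set.ssubset_iff_of_subset (fun j => ?_) |>.mpr
    ⟨j₀, hd hdj₀.ne, ?_⟩⟩
  · rcases le_or_gt 0 (d j) with hdj | hdj
    · have : 0 ≤ y j₀ / -d j₀ * d j := mul_nonneg (div_nonneg (hy j₀) (by linarith)) hdj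
      simpa using add_nonneg (hy j) this
    · have := hmin j hdj
      rw [le_div_iff₀ (by linarith)] at this
      simp only [Pi.zero_apply, Pi.add_apply, Pi.smul_apply, smul_eq_mul]
      linarith
  · contrapose
    intro hyj
    have hdj : d j = 0 := notMem_support.mp fun h => hyj (hd h)
    simp_all
  · simp only [mem_support, Pi.add_apply, Pi.smul_apply, smul_eq_mul, not_not]
    field_simp [hdj₀.ne]
    ring

/- Take a representation of minimal support: a kernel vector supported inside it would let
`exists_nonneg_add_smul_support_ssubset` shrink the support further. -/
theorem exists_nonneg_map_eq_injective_on_support {E : Type*} [AddCommGroup E] [Module ℝ E]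
    (f : (σ → ℝ) →ₗ[ℝ] E) {x : σ → ℝ} (hx : 0 ≤ x) :
    ∃ y, 0 ≤ y ∧ f y = f x ∧ ∀ d, f d = 0 → support d ⊆ support y → d = 0 := by
  obtain ⟨y, ⟨hy, hfy⟩, hmin⟩ := (InvImage.wf (fun y : σ → ℝ => support y) wellFounded_lt).has_min
    {y | 0 ≤ y ∧ f y = f x} ⟨x, hx, rfl⟩
  refine ⟨y, hy, hfy, fun d hd hsupp => ?_⟩
  by_contra hne
  obtain ⟨e, he, hesupp, hneg⟩ : ∃ e, f e = 0 ∧ support e ⊆ support y ∧ ∃ j, e j < 0 := by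
    obtain ⟨j, hj⟩ := Function.ne_iff.mp hne
    rcases hj.lt_or_gt with hj | hj
    · exact ⟨d, hd, hsupp, j, hj⟩
    · exact ⟨-d, by simp [hd], by simpa using hsupp, j, by simpa using hj⟩
  obtain ⟨t, ht, hlt⟩ := exists_nonneg_add_smul_support_ssubset hy hesupp hneg
  exact hmin _ ⟨ht, by simp [he, hfy]⟩ hlt

theorem isClosed_image_Ici_zero {E : Type*} [AddCommGroup E] [Module ℝ E] [TopologicalSpace E]
    [IsTopologicalAddGroup E] [ContinuousSMul ℝ E] [T2Space E] (f : (σ → ℝ) →ₗ[ℝ] E) :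
    IsClosed (f '' Set.Ici 0) := by
  let V (S : Set σ) : Submodule ℝ (σ → ℝ) := Submodule.pi Sᶜ fun _ => ⊥
  have mem_V {S : Set σ} {z : σ → ℝ} : z ∈ V S ↔ support z ⊆ S := by
    simp only [V, Submodule.mem_pi, Submodule.mem_bot, support_subset_iff', mem_compl_iff]
  have hunion : f '' Set.Ici 0 = ⋃ (S : Set σ) (_ : Disjoint (V S) (LinearMap.ker f)),
      f '' (V S ∩ Set.Ici 0) := by
    refine Subset.antisymm ?_ (iUnion₂_subset fun S _ => image_mono inter_subset_right)
    rintro _ ⟨x, hx, rfl⟩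
    obtain ⟨y, hy, hfy, hinj⟩ := exists_nonneg_map_eq_injective_on_support f hx
    refine mem_iUnion₂.mpr ⟨support y, Submodule.disjoint_def.mpr fun d hd hker => ?_,
      y, ⟨mem_V.mpr subset_rfl, hy⟩, hfy⟩
    exact hinj d hker (mem_V.mp hd)
  rw [hunion]
  refine isClosed_iUnion_of_finite fun S => isClosed_iUnion_of_finite fun hS => ?_
  have hemb := LinearMap.isClosedEmbedding_of_injective
    (LinearMap.ker_eq_bot.mpr (LinearMap.injective_domRestrict_iff.mpr hS))
  rw [← Subtype.image_preimage_coe, image_image]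
  exact hemb.isClosedMap _ (isClosed_Ici.preimage continuous_subtype_val)

end Cone

section Farkas

variable {ι σ : Type*} [Fintype ι] [Fintype σ]

theorem isClosed_Ici_zero_add_submodule (W : Submodule ℝ (σ → ℝ)) :
    IsClosed (Set.Ici 0 + (W : Set (σ → ℝ))) := by
  -- makes the quotient `(σ → ℝ) ⧸ W` Hausdorff
  have : IsClosed (W : Set (σ → ℝ)) := W.closed_of_finiteDimensional
  have : Set.Ici 0 + (W : Set (σ → ℝ)) = W.mkQ ⁻¹' (W.mkQ '' Set.Ici 0) := by
    ext z
    simp only [Set.mem_add, Set.mem_preimage, Set.mem_image, Submodule.mkQ_apply,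
      Submodule.Quotient.eq, SetLike.mem_coe]
    constructor
    · rintro ⟨y, hy, w, hw, rfl⟩
      exact ⟨y, hy, by simpa using W.neg_mem hw⟩
    · rintro ⟨y, hy, hw⟩
      exact ⟨y, hy, z - y, by simpa using W.neg_mem hw, by abel⟩
  rw [this]
  exact (isClosed_image_Ici_zero W.mkQ).preimage continuous_quot_mk

theorem StrongDual.apply_eq_dotProduct [DecidableEq σ] (φ : StrongDual ℝ (σ → ℝ)) (z : σ → ℝ) :
    φ z = z ⬝ᵥ fun j => φ (Pi.single j 1) := by
  conv_lhs => rw [← Finset.univ_sum_single z]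
  simp only [map_sum, dotProduct]
  refine Finset.sum_congr rfl fun j _ => ?_
  rw [← smul_eq_mul, ← map_smul, ← Pi.single_smul, smul_eq_mul, mul_one]

theorem exists_vecMul_le_iff (B : Matrix ι σ ℝ) (w : σ → ℝ) :
    (∃ u, u ᵥ* B ≤ w) ↔ ∀ y, 0 ≤ y → B *ᵥ y = 0 → 0 ≤ w ⬝ᵥ y := by
  classical
  refine ⟨fun ⟨u, hu⟩ y hy hBy => ?_, fun h => ?_⟩
  · calc 0 = u ⬝ᵥ B *ᵥ y := by simp [hBy]
      _ = u ᵥ* B ⬝ᵥ y := dotProduct_mulVec u B y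
      _ ≤ w ⬝ᵥ y := dotProduct_le_dotProduct_of_nonneg_right hu hy
  by_contra hw
  let W := LinearMap.range (vecMulLinear B)
  let K : PointedCone ℝ (σ → ℝ) := PointedCone.positive ℝ (σ → ℝ) ⊔ PointedCone.ofSubmodule W
  have hK : (K : Set (σ → ℝ)) = Set.Ici 0 + (W : Set (σ → ℝ)) := Submodule.coe_sup _ _
  let C : ProperCone ℝ (σ → ℝ) := ⟨K, (hK ▸ isClosed_Ici_zero_add_submodule W :)⟩
  have mem_C {z : σ → ℝ} : z ∈ C ↔ ∃ u, u ᵥ* B ≤ z := by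
    change z ∈ (K : Set (σ → ℝ)) ↔ _
    rw [hK]
    constructor
    · rintro ⟨p, hp, _, ⟨u, rfl⟩, rfl⟩
      exact ⟨u, le_add_of_nonneg_left hp⟩
    · rintro ⟨u, hu⟩
      exact ⟨z - u ᵥ* B, sub_nonneg.mpr hu, _, ⟨u, rfl⟩, sub_add_cancel _ _⟩
  obtain ⟨φ, hφC, hφw⟩ := C.hyperplane_separation_point (mem_C.not.mpr hw)
  set y := fun j => φ (Pi.single j 1)
  have hy : 0 ≤ y := fun j => hφC _ (mem_C.mpr ⟨0, by simp [Pi.single_nonneg]⟩)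
  have hBy : B *ᵥ y = 0 := by
    have := hφC _ (mem_C.mpr ⟨-(B *ᵥ y), le_rfl⟩)
    rw [StrongDual.apply_eq_dotProduct, ← dotProduct_mulVec, neg_dotProduct,
      neg_nonneg] at this
    exact dotProduct_self_eq_zero.mp
      (le_antisymm this (Finset.sum_nonneg fun i _ => mul_self_nonneg _))
  have := h y hy hBy
  rw [StrongDual.apply_eq_dotProduct] at hφw
  linarith

end Farkas

section MatrixLemmas

variable {ι κ : Type*}

theorem vecMul_le_iff [Fintype ι] {A : Matrix ι κ ℝ} {u : ι → ℝ} {c : κ → ℝ} :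
    u ᵥ* A ≤ c ↔ ∀ j, ∑ i, A i j * u i ≤ c j := by
  simp only [Pi.le_def, vecMul, dotProduct, mul_comm]

/- `fromCols A (replicateCol Unit (-b))` is the matrix `[A | -b]`, acting on `(x, μ)` as
`A x - μ b`; with the cost `Sum.elim c (fun _ => -v)` it is the LP homogenized at value `v`. -/
theorem fromCols_replicateCol_neg_mulVec [Fintype κ] (A : Matrix ι κ ℝ) (b : ι → ℝ)
    (y : κ ⊕ Unit → ℝ) :
    fromCols A (replicateCol Unit (-b)) *ᵥ y = A *ᵥ (y ∘ Sum.inl) - y (Sum.inr ()) • b := by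
  ext i
  simp [mulVec, dotProduct, mul_comm, sub_eq_add_neg]

theorem vecMul_fromCols_replicateCol_neg_le_iff [Fintype ι] {A : Matrix ι κ ℝ} {c : κ → ℝ}
    {b u : ι → ℝ} {v : ℝ} :
    u ᵥ* fromCols A (replicateCol Unit (-b)) ≤ Sum.elim c (fun _ => -v) ↔
      u ᵥ* A ≤ c ∧ v ≤ u ⬝ᵥ b := by
  simp [mulVec_replicateCol_eq_const, Pi.le_def]

theorem sumElim_const_neg_dotProduct [Fintype κ] (c : κ → ℝ) (v : ℝ) (y : κ ⊕ Unit → ℝ) :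
    Sum.elim c (fun _ => -v) ⬝ᵥ y = c ⬝ᵥ (y ∘ Sum.inl) - v * y (Sum.inr ()) := by
  simp [dotProduct, Fintype.sum_sum_type, sub_eq_add_neg]

end MatrixLemmas

section LinearProgram

variable {ι κ : Type*} [Fintype κ] (A : Matrix ι κ ℝ) (c : κ → ℝ)

def feasibleValues (b : ι → ℝ) : Set ℝ :=
  {v | ∃ x, 0 ≤ x ∧ A *ᵥ x = b ∧ v = c ⬝ᵥ x}

variable {A c}

theorem dotProduct_mulVec_le_of_vecMul_le [Fintype ι] {u : ι → ℝ} {x : κ → ℝ} (hu : u ᵥ* A ≤ c)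
    (hx : 0 ≤ x) : u ⬝ᵥ A *ᵥ x ≤ c ⬝ᵥ x :=
  dotProduct_mulVec u A x ▸ dotProduct_le_dotProduct_of_nonneg_right hu hx

theorem dotProduct_mem_lowerBounds_feasibleValues [Fintype ι] {u : ι → ℝ} (hu : u ᵥ* A ≤ c)
    (b : ι → ℝ) :
    u ⬝ᵥ b ∈ lowerBounds (feasibleValues A c b) := by
  rintro _ ⟨x, hx, rfl, rfl⟩
  exact dotProduct_mulVec_le_of_vecMul_le hu hx

theorem isClosed_feasibleValues (b : ι → ℝ) : IsClosed (feasibleValues A c b) := by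
  classical
  let f := A.mulVecLin.prod (dotProductEquiv ℝ κ c)
  have : feasibleValues A c b = (fun v => (b, v)) ⁻¹' (f '' Set.Ici 0) := by
    ext v
    simp [feasibleValues, f, eq_comm]
  rw [this]
  exact (isClosed_image_Ici_zero f).preimage (Continuous.prodMk_right b)

theorem sInf_mem_feasibleValues {b : ι → ℝ} (hb : ∃ x, 0 ≤ x ∧ A *ᵥ x = b)
    (hbdd : BddBelow (feasibleValues A c b)) :
    sInf (feasibleValues A c b) ∈ feasibleValues A c b := by
  obtain ⟨x, hx, hAx⟩ := hb
  exact (isClosed_feasibleValues b).csInf_mem ⟨_, x, hx, hAx, rfl⟩ hbdd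

theorem mul_sInf_feasibleValues_le_dotProduct {b : ι → ℝ} (hb : ∃ x, 0 ≤ x ∧ A *ᵥ x = b)
    (hbdd : BddBelow (feasibleValues A c b)) {x : κ → ℝ} {μ : ℝ} (hx : 0 ≤ x) (hμ : 0 ≤ μ)
    (hAx : A *ᵥ x = μ • b) : μ * sInf (feasibleValues A c b) ≤ c ⬝ᵥ x := by
  obtain ⟨x₀, hx₀, hAx₀⟩ := hb
  set v := sInf (feasibleValues A c b)
  -- `(x₀ + t x) / (1 + t μ)` is feasible at `b` for every `t ≥ 0`.
  have key (t : ℝ) (ht : 0 ≤ t) : t * (μ * v - c ⬝ᵥ x) ≤ c ⬝ᵥ x₀ - v := by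
    have hpos : 0 < 1 + t * μ := by positivity
    have := csInf_le hbdd ⟨(1 + t * μ)⁻¹ • (x₀ + t • x), ?_, ?_, rfl⟩
    · rw [dotProduct_smul, dotProduct_add, dotProduct_smul, smul_eq_mul, smul_eq_mul,
        le_inv_mul_iff₀ hpos] at this
      linarith
    · exact smul_nonneg (inv_nonneg.mpr hpos.le) (add_nonneg hx₀ (smul_nonneg ht hx))
    · rw [mulVec_smul, mulVec_add, mulVec_smul, hAx₀, hAx, smul_smul,
        show b + (t * μ) • b = (1 + t * μ) • b by rw [add_smul, one_smul], smul_smul,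
        inv_mul_cancel₀ hpos.ne', one_smul]
  by_contra! hlt
  have hv : v ≤ c ⬝ᵥ x₀ := csInf_le hbdd ⟨x₀, hx₀, hAx₀, rfl⟩
  have := key ((c ⬝ᵥ x₀ - v + 1) / (μ * v - c ⬝ᵥ x)) (div_nonneg (by linarith) (by linarith))
  rw [div_mul_cancel₀ _ (by linarith)] at this
  linarith

theorem exists_vecMul_le_dotProduct_eq_sInf [Fintype ι] {b : ι → ℝ}
    (hb : ∃ x, 0 ≤ x ∧ A *ᵥ x = b) (hbdd : BddBelow (feasibleValues A c b)) :
    ∃ u, u ᵥ* A ≤ c ∧ u ⬝ᵥ b = sInf (feasibleValues A c b) := by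
  obtain ⟨u, hu⟩ := (exists_vecMul_le_iff (fromCols A (replicateCol Unit (-b)))
    (Sum.elim c fun _ => -sInf (feasibleValues A c b))).mpr fun y hy hBy => by
      rw [fromCols_replicateCol_neg_mulVec, sub_eq_zero] at hBy
      rw [sumElim_const_neg_dotProduct, sub_nonneg, mul_comm]
      exact mul_sInf_feasibleValues_le_dotProduct hb hbdd (fun j => hy _) (hy _) hBy
  obtain ⟨huA, hub⟩ := vecMul_fromCols_replicateCol_neg_le_iff.mp hu
  obtain ⟨x, hx, hAx⟩ := hb
  exact ⟨u, huA, le_antisymm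
    (le_csInf ⟨_, x, hx, hAx, rfl⟩ (dotProduct_mem_lowerBounds_feasibleValues huA b)) hub⟩

theorem isLeast_feasibleValues [Fintype ι] {b : ι → ℝ} {u : ι → ℝ} {x : κ → ℝ}
    (hu : u ᵥ* A ≤ c) (hx : 0 ≤ x) (hAx : A *ᵥ x = b) (hcx : c ⬝ᵥ x = u ⬝ᵥ b) :
    IsLeast (feasibleValues A c b) (u ⬝ᵥ b) :=
  ⟨⟨x, hx, hAx, hcx.symm⟩, dotProduct_mem_lowerBounds_feasibleValues hu b⟩

theorem lpVal_eq_sInf_feasibleValues {m n : ℕ} (A : Matrix (Fin m) (Fin n) ℝ) (c : Fin n → ℝ)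
    (b : Fin m → ℝ) : lpVal A c b = sInf (feasibleValues A c b) :=
  rfl

end LinearProgram

section DirectionalDerivative

variable {ι κ : Type*} [Fintype ι] [Fintype κ] {A : Matrix ι κ ℝ} {c : κ → ℝ} {b h : ι → ℝ}

def dualOptimalSet (A : Matrix ι κ ℝ) (c : κ → ℝ) (b : ι → ℝ) : Set (ι → ℝ) :=
  {u | u ᵥ* A ≤ c ∧ u ⬝ᵥ b = sInf (feasibleValues A c b)}

/- Primal and dual optima `(x, μ)` and `u` of the directional LP of the header. -/
theorem exists_directional_optimal (hb : ∃ x, 0 ≤ x ∧ A *ᵥ x = b)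
    (hbdd : BddBelow (feasibleValues A c b)) {t : ℝ} (ht : 0 < t)
    (hbh : ∃ x, 0 ≤ x ∧ A *ᵥ x = b + t • h) :
    ∃ x μ u, 0 ≤ x ∧ 0 ≤ μ ∧ A *ᵥ x = h + μ • b ∧ u ∈ dualOptimalSet A c b ∧
      c ⬝ᵥ x = u ⬝ᵥ h + μ * sInf (feasibleValues A c b) := by
  set v := sInf (feasibleValues A c b)
  set B := fromCols A (replicateCol Unit (-b))
  have hfeas : ∃ y, 0 ≤ y ∧ B *ᵥ y = h := by
    obtain ⟨x, hx, hAx⟩ := hbh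
    refine ⟨Sum.elim (t⁻¹ • x) fun _ => t⁻¹, ?_, ?_⟩
    · rintro (j | _)
      · exact smul_nonneg (inv_nonneg.mpr ht.le) (hx j)
      · exact inv_nonneg.mpr ht.le
    · rw [fromCols_replicateCol_neg_mulVec]
      simp only [Sum.elim_comp_inl, Sum.elim_inr, mulVec_smul, hAx, smul_add, smul_smul,
        inv_mul_cancel₀ ht.ne', one_smul, add_sub_cancel_left]
  obtain ⟨u₀, hu₀, hu₀b⟩ := exists_vecMul_le_dotProduct_eq_sInf hb hbdd
  have hbdd' : BddBelow (feasibleValues B (Sum.elim c fun _ => -v) h) :=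
    ⟨_, dotProduct_mem_lowerBounds_feasibleValues
      (vecMul_fromCols_replicateCol_neg_le_iff.mpr ⟨hu₀, hu₀b.ge⟩) h⟩
  obtain ⟨y, hy, hBy, hcy⟩ := sInf_mem_feasibleValues hfeas hbdd'
  obtain ⟨u, hu, huh⟩ := exists_vecMul_le_dotProduct_eq_sInf hfeas hbdd'
  obtain ⟨huA, hub⟩ := vecMul_fromCols_replicateCol_neg_le_iff.mp hu
  obtain ⟨x₀, hx₀, hAx₀⟩ := hb
  have hub' : u ⬝ᵥ b ≤ v :=
    le_csInf ⟨_, x₀, hx₀, hAx₀, rfl⟩ (dotProduct_mem_lowerBounds_feasibleValues huA b)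
  refine ⟨y ∘ Sum.inl, y (Sum.inr ()), u, fun j => hy _, hy _, ?_,
    ⟨huA, le_antisymm hub' hub⟩, ?_⟩
  · rw [fromCols_replicateCol_neg_mulVec] at hBy
    rw [← hBy, sub_add_cancel]
  · rw [sumElim_const_neg_dotProduct] at hcy
    linarith

theorem isGreatest_image_dualOptimalSet {x : κ → ℝ} {μ : ℝ} {u : ι → ℝ} (hx : 0 ≤ x)
    (hAx : A *ᵥ x = h + μ • b) (hu : u ∈ dualOptimalSet A c b)
    (hcx : c ⬝ᵥ x = u ⬝ᵥ h + μ * sInf (feasibleValues A c b)) :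
    IsGreatest ((· ⬝ᵥ h) '' dualOptimalSet A c b) (u ⬝ᵥ h) := by
  refine ⟨⟨u, hu, rfl⟩, ?_⟩
  rintro _ ⟨u', ⟨hu'A, hu'b⟩, rfl⟩
  have := dotProduct_mulVec_le_of_vecMul_le hu'A hx
  rw [hAx, dotProduct_add, dotProduct_smul, hu'b, smul_eq_mul] at this
  linarith

theorem isLeast_feasibleValues_add_smul {x₀ x : κ → ℝ} {μ s : ℝ} {u : ι → ℝ}
    (hx₀ : 0 ≤ x₀) (hAx₀ : A *ᵥ x₀ = b) (hx : 0 ≤ x) (hAx : A *ᵥ x = h + μ • b)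
    (hu : u ᵥ* A ≤ c) (hcx₀ : c ⬝ᵥ x₀ = u ⬝ᵥ b) (hcx : c ⬝ᵥ x = u ⬝ᵥ h + μ * u ⬝ᵥ b)
    (hs : 0 ≤ s) (hsμ : s * μ ≤ 1) :
    IsLeast (feasibleValues A c (b + s • h)) (u ⬝ᵥ (b + s • h)) := by
  refine isLeast_feasibleValues (x := (1 - s * μ) • x₀ + s • x) hu
    (add_nonneg (smul_nonneg (sub_nonneg.mpr hsμ) hx₀) (smul_nonneg hs hx)) ?_ ?_
  · rw [mulVec_add, mulVec_smul, mulVec_smul, hAx₀, hAx]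
    module
  · simp only [dotProduct_add, dotProduct_smul, smul_eq_mul, hcx₀, hcx]
    ring

end DirectionalDerivative

/-- Directional derivative of the LP value function equals the support function of the
dual optimal set. -/
theorem stmt9 {m n : ℕ} (A : Matrix (Fin m) (Fin n) ℝ) (c : Fin n → ℝ) (b h : Fin m → ℝ)
    (hfeas : ∃ x : Fin n → ℝ, (∀ j, 0 ≤ x j) ∧ A.mulVec x = b)
    (hbdd : BddBelow {v | ∃ x : Fin n → ℝ, (∀ j, 0 ≤ x j) ∧ A.mulVec x = b ∧
      v = ∑ j, c j * x j})
    (hsmall : ∃ ε > (0 : ℝ), ∀ t : ℝ, 0 < t → t < ε →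
      (∃ x : Fin n → ℝ, (∀ j, 0 ≤ x j) ∧ A.mulVec x = b + t • h) ∧
      BddBelow {v | ∃ x : Fin n → ℝ, (∀ j, 0 ≤ x j) ∧ A.mulVec x = b + t • h ∧
        v = ∑ j, c j * x j}) :
    Filter.Tendsto (fun t : ℝ => (lpVal A c (b + t • h) - lpVal A c b) / t)
      (nhdsWithin 0 (Set.Ioi 0))
      (nhds (sSup {r | ∃ u : Fin m → ℝ, (∀ j, ∑ i, A i j * u i ≤ c j) ∧
        (∑ i, u i * b i = lpVal A c b) ∧ r = ∑ i, u i * h i})) := by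
  obtain ⟨ε, hε, hsmall⟩ := hsmall
  obtain ⟨x₀, hx₀, hAx₀, hcx₀⟩ := sInf_mem_feasibleValues hfeas hbdd
  obtain ⟨x, μ, u, hx, hμ, hAx, hu, hcx⟩ := exists_directional_optimal hfeas hbdd (half_pos hε)
    (hsmall _ (half_pos hε) (half_lt_self hε)).1
  have hdual : {r | ∃ u : Fin m → ℝ, (∀ j, ∑ i, A i j * u i ≤ c j) ∧
      (∑ i, u i * b i = lpVal A c b) ∧ r = ∑ i, u i * h i} =
      (· ⬝ᵥ h) '' dualOptimalSet A c b := by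
    ext r
    simp only [dualOptimalSet, ← vecMul_le_iff, Set.mem_image]
    exact ⟨fun ⟨u, hA, hb, hr⟩ => ⟨u, ⟨hA, hb⟩, hr.symm⟩,
      fun ⟨u, ⟨hA, hb⟩, hr⟩ => ⟨u, hA, hb, hr.symm⟩⟩
  have hval (s : ℝ) (hs : s ∈ Ioo 0 (1 / (μ + 1))) :
      lpVal A c (b + s • h) = lpVal A c b + s * u ⬝ᵥ h := by
    have hsμ : s * μ ≤ 1 := by
      nlinarith [hs.1, (lt_div_iff₀ (by linarith : 0 < μ + 1)).mp hs.2]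
    rw [← hu.2] at hcx hcx₀
    have := isLeast_feasibleValues_add_smul hx₀ hAx₀ hx hAx hu.1 hcx₀.symm hcx hs.1.le hsμ
    rw [lpVal_eq_sInf_feasibleValues, lpVal_eq_sInf_feasibleValues, this.csInf_eq, ← hu.2,
      dotProduct_add, dotProduct_smul, smul_eq_mul]
  rw [hdual, (isGreatest_image_dualOptimalSet hx hAx hu hcx).csSup_eq]
  refine tendsto_const_nhds.congr' ?_
  filter_upwards [Ioo_mem_nhdsGT (div_pos one_pos (by linarith : 0 < μ + 1))] with s hs
  rw [hval s hs, add_sub_cancel_left, mul_div_cancel_left₀ _ hs.1.ne']
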